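/- Uniform boundedness of the correction term: for every dimension $d$, every $i \in \{1,\dots,d\}$, every $r \in \mathbb{N}$, and every $x$ in the simplex $\mathcal{S}$, the quantity $R_{i,r}(x) := r^{1/2} \sum_{k,\ell \in \mathbb{N}_0^d \cap r\mathcal{S}} ((k_i \wedge \ell_i)/r - x_i) P_{k,r}(x) P_{\ell,r}(x)$ satisfies $|R_{i,r}(x)| \le 1$. -/

import Mathlib

open MeasureTheory Finset

/-- The d-dimensional unit simplex. -/
def simplexSet (d : ℕ) : Set (Fin d → ℝ) :=
  {x | (∀ i, 0 ≤ x i ∧ x i ≤ 1) ∧ ∑ i, x i ≤ 1}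

/-- The lattice points of the discrete simplex `ℕ₀^d ∩ mS`. -/
def grid (d m : ℕ) : Finset (Fin d → ℕ) :=
  (Finset.Icc 0 (fun _ => m)).filter (fun k => ∑ i, k i ≤ m)

/-- Multinomial(m, x) probability mass at k. -/
noncomputable def Pw (d m : ℕ) (k : Fin d → ℕ) (x : Fin d → ℝ) : ℝ :=
  ((m.factorial : ℝ) / ((m - ∑ i, k i).factorial * ∏ i, (k i).factorial)) *
    (1 - ∑ i, x i) ^ (m - ∑ i, k i) * ∏ i, x i ^ k i

/-! Since `|min a b - c| ≤ |a - c| + |b - c|` and the weights `P_{k,r}(x)` sum to one, the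
double sum is at most `2 E|k_i/r - x_i|`, which Cauchy–Schwarz bounds by
`2 √(x_i (1 - x_i) / r) ≤ r^{-1/2}`. The variance identity holds because the `i`-th marginal of
Multinomial`(r, x)` is Binomial`(r, x_i)`: by the multinomial theorem,
`∑_k P_{k,r}(x) t^{k_i} = (t x_i + 1 - x_i)^r`, and coefficients of `t^n` can be compared. -/

lemma mem_grid {d m : ℕ} {k : Fin d → ℕ} : k ∈ grid d m ↔ ∑ i, k i ≤ m := by
  refine ⟨fun hk => (mem_filter.1 hk).2, fun hk => mem_filter.2 ⟨mem_Icc.2 ⟨zero_le, ?_⟩, hk⟩⟩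
  exact fun i => (single_le_sum (fun j _ => Nat.zero_le (k j)) (mem_univ i)).trans hk

lemma multinomial_option_elim {d m : ℕ} {k : Fin d → ℕ} (hk : ∑ i, k i ≤ m) :
    (Nat.multinomial univ (fun o : Option (Fin d) => o.elim (m - ∑ i, k i) k) : ℝ) =
      m.factorial / ((m - ∑ i, k i).factorial * ∏ i, (k i).factorial) := by
  have hspec := Nat.multinomial_spec univ (fun o : Option (Fin d) => o.elim (m - ∑ i, k i) k)
  simp only [Fintype.sum_option, Fintype.prod_option, Option.elim, Nat.sub_add_cancel hk] at hspec
  rw [eq_div_iff (by positivity), mul_comm]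
  exact_mod_cast hspec

theorem sum_grid_multinomial (d m : ℕ) (z : ℝ) (y : Fin d → ℝ) :
    ∑ k ∈ grid d m, (m.factorial : ℝ) / ((m - ∑ i, k i).factorial * ∏ i, (k i).factorial) *
      z ^ (m - ∑ i, k i) * ∏ i, y i ^ k i = (z + ∑ i, y i) ^ m := by
  rw [show z + ∑ i, y i = ∑ o : Option (Fin d), o.elim z y by rw [Fintype.sum_option]; rfl,
    sum_pow_eq_sum_piAntidiag]
  -- the extra coordinate `none` carries the slack `m - ∑ i, k i` of a lattice point `k`
  refine sum_nbij' (fun k o => o.elim (m - ∑ i, k i) k) (fun k i => k (some i))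
    ?_ ?_ (fun _ _ => rfl) ?_ ?_
  · intro k hk
    rw [mem_grid] at hk
    rw [mem_piAntidiag, Fintype.sum_option]
    exact ⟨Nat.sub_add_cancel hk, fun _ _ => mem_univ _⟩
  · intro k hk
    rw [mem_piAntidiag, Fintype.sum_option] at hk
    rw [mem_grid]
    omega
  · intro k hk
    rw [mem_piAntidiag, Fintype.sum_option] at hk
    funext o
    cases o <;> simp only [Option.elim]
    omega
  · intro k hk
    rw [mem_grid] at hk
    rw [multinomial_option_elim hk, Fintype.prod_option]
    simp only [Option.elim]
    ring

lemma sum_Pw (d m : ℕ) (x : Fin d → ℝ) : ∑ k ∈ grid d m, Pw d m k x = 1 := by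
  simp only [Pw, sum_grid_multinomial, sub_add_cancel, one_pow]

lemma Pw_nonneg {d m : ℕ} {x : Fin d → ℝ} (hx : x ∈ simplexSet d) (k : Fin d → ℕ) :
    0 ≤ Pw d m k x := by
  have hx0 : ∀ i, 0 ≤ x i := fun i => (hx.1 i).1
  have hz : 0 ≤ 1 - ∑ i, x i := sub_nonneg.2 hx.2
  exact mul_nonneg (mul_nonneg (by positivity) (pow_nonneg hz _))
    (prod_nonneg fun i _ => pow_nonneg (hx0 i) _)

lemma sum_Pw_mul_pow (d r : ℕ) (i : Fin d) (x : Fin d → ℝ) (t : ℝ) :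
    ∑ k ∈ grid d r, Pw d r k x * t ^ k i = (t * x i + (1 - x i)) ^ r := by
  have hprod : ∀ k : Fin d → ℕ,
      (∏ j, x j ^ k j) * t ^ k i = ∏ j, ((if j = i then t else 1) * x j) ^ k j := by
    intro k
    simp only [mul_pow, prod_mul_distrib, ite_pow, one_pow, Fintype.prod_ite_eq']
    ring
  have hsum : 1 - ∑ j, x j + ∑ j, (if j = i then t else 1) * x j = t * x i + (1 - x i) := by
    have h : ∀ j, (if j = i then t else 1) * x j = x j + if j = i then (t - 1) * x i else 0 := by
      intro j
      split_ifs with hj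
      · rw [hj]; ring
      · ring
    simp only [h, sum_add_distrib, Fintype.sum_ite_eq']
    ring
  simp only [Pw, mul_assoc, hprod]
  simp only [← mul_assoc]
  rw [sum_grid_multinomial, hsum]

open Polynomial

lemma sum_filter_eq_of_sum_mul_pow_eq {ι : Type*} (s : Finset ι) (f : ι → ℕ) (a : ι → ℝ)
    (N : ℕ) (b : ℕ → ℝ) (h : ∀ t : ℝ, ∑ k ∈ s, a k * t ^ f k = ∑ n ∈ range N, b n * t ^ n)
    {n : ℕ} (hn : n < N) : ∑ k ∈ s with f k = n, a k = b n := by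
  have hpoly : ∑ k ∈ s, C (a k) * X ^ f k = ∑ n ∈ range N, C (b n) * X ^ n :=
    Polynomial.funext fun t => by simpa [eval_finsetSum] using h t
  have hcoeff := congrArg (coeff · n) hpoly
  simpa [finsetSum_coeff, coeff_C_mul_X_pow, sum_filter, eq_comm, hn] using hcoeff

lemma sum_Pw_filter_eq_bernstein (d r : ℕ) (i : Fin d) (x : Fin d → ℝ) {n : ℕ} (hn : n ≤ r) :
    ∑ k ∈ grid d r with k i = n, Pw d r k x = (bernsteinPolynomial ℝ r n).eval (x i) := by
  refine sum_filter_eq_of_sum_mul_pow_eq _ (fun k : Fin d → ℕ => k i) _ (r + 1)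
    (fun n => (bernsteinPolynomial ℝ r n).eval (x i)) (fun t => ?_) (Nat.lt_succ_of_le hn)
  rw [sum_Pw_mul_pow, add_pow]
  refine sum_congr rfl fun m _ => ?_
  simp only [bernsteinPolynomial, eval_mul, eval_pow, eval_X, eval_sub, eval_one, eval_natCast]
  ring

lemma sum_mul_Pw_eq_sum_bernstein (d r : ℕ) (i : Fin d) (x : Fin d → ℝ) (g : ℕ → ℝ) :
    ∑ k ∈ grid d r, g (k i) * Pw d r k x =
      ∑ n ∈ range (r + 1), g n * (bernsteinPolynomial ℝ r n).eval (x i) := by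
  have hmaps : ∀ k ∈ grid d r, k i ∈ range (r + 1) := fun k hk =>
    mem_range_succ_iff.2 ((single_le_sum (fun j _ => Nat.zero_le (k j)) (mem_univ i)).trans
      (mem_grid.1 hk))
  rw [← sum_fiberwise_of_maps_to hmaps]
  refine sum_congr rfl fun n hn => ?_
  rw [← sum_Pw_filter_eq_bernstein d r i x (mem_range_succ_iff.1 hn), mul_sum]
  exact sum_congr rfl fun k hk => by rw [(mem_filter.1 hk).2]

lemma sum_sq_mul_Pw {d r : ℕ} (hr : 0 < r) (i : Fin d) (x : Fin d → ℝ) :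
    ∑ k ∈ grid d r, ((k i : ℝ) / r - x i) ^ 2 * Pw d r k x = x i * (1 - x i) / r := by
  have hvar := congrArg (eval (x i)) (bernsteinPolynomial.variance ℝ r)
  simp only [eval_finsetSum, eval_mul, eval_pow, eval_sub, eval_X, eval_one,
    eval_natCast, nsmul_eq_mul] at hvar
  have hr' : (r : ℝ) ≠ 0 := by positivity
  have hsq : ∀ n : ℕ, ((n : ℝ) / r - x i) ^ 2 = (r * x i - n) ^ 2 / r ^ 2 := fun n => by
    field_simp
    ring
  rw [sum_mul_Pw_eq_sum_bernstein d r i x (fun n => ((n : ℝ) / r - x i) ^ 2)]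
  simp only [hsq, div_mul_eq_mul_div, ← sum_div, hvar]
  field_simp

section ProbabilityWeights

variable {ι : Type*} {s : Finset ι} {w : ι → ℝ}

lemma sum_abs_mul_le_sqrt_sum_sq_mul (hw : ∀ k ∈ s, 0 ≤ w k) (hw1 : ∑ k ∈ s, w k = 1)
    (f : ι → ℝ) : ∑ k ∈ s, |f k| * w k ≤ √(∑ k ∈ s, f k ^ 2 * w k) := by
  have hcs : (∑ k ∈ s, |f k| * w k) ^ 2 ≤ (∑ k ∈ s, f k ^ 2 * w k) * ∑ k ∈ s, w k :=
    sum_sq_le_sum_mul_sum_of_sq_le_mul s (fun k hk => mul_nonneg (sq_nonneg _) (hw k hk)) hw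
      fun k _ => le_of_eq (by rw [mul_pow, sq_abs]; ring)
  rw [hw1, mul_one] at hcs
  exact (le_abs_self _).trans (Real.abs_le_sqrt hcs)

lemma abs_sum_sum_min_sub_mul_le (hw : ∀ k ∈ s, 0 ≤ w k) (hw1 : ∑ k ∈ s, w k = 1)
    (a : ι → ℝ) (c : ℝ) :
    |∑ k ∈ s, ∑ l ∈ s, (min (a k) (a l) - c) * w k * w l| ≤ 2 * ∑ k ∈ s, |a k - c| * w k := by
  have hmin : ∀ k l, |min (a k) (a l) - c| ≤ |a k - c| + |a l - c| := fun k l => by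
    simpa using (abs_min_sub_min_le_max (a k) (a l) c c).trans
      (max_le_add_of_nonneg (abs_nonneg _) (abs_nonneg _))
  calc |∑ k ∈ s, ∑ l ∈ s, (min (a k) (a l) - c) * w k * w l|
      ≤ ∑ k ∈ s, ∑ l ∈ s, (|a k - c| + |a l - c|) * w k * w l := by
        refine (abs_sum_le_sum_abs _ _).trans (sum_le_sum fun k hk => ?_)
        refine (abs_sum_le_sum_abs _ _).trans (sum_le_sum fun l hl => ?_)
        rw [abs_mul, abs_mul, abs_of_nonneg (hw k hk), abs_of_nonneg (hw l hl)]
        exact mul_le_mul_of_nonneg_right (mul_le_mul_of_nonneg_right (hmin k l) (hw k hk)) (hw l hl)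
    _ = 2 * ∑ k ∈ s, |a k - c| * w k := by
        have hsplit : ∀ k l, (|a k - c| + |a l - c|) * w k * w l =
            |a k - c| * w k * w l + w k * (|a l - c| * w l) := fun k l => by ring
        simp only [hsplit, sum_add_distrib, ← mul_sum, ← sum_mul, hw1]
        ring

end ProbabilityWeights

/-- Uniform boundedness of the correction term R_{i,r}. -/
theorem R_term_uniform_bound (d r : ℕ) (hr : 0 < r) (i : Fin d)
    (x : Fin d → ℝ) (hx : x ∈ simplexSet d) :
    |Real.sqrt r * ∑ k ∈ grid d r, ∑ l ∈ grid d r,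
        ((min (k i) (l i) : ℝ) / r - x i) * Pw d r k x * Pw d r l x| ≤ 1 := by
  have hr' : (0 : ℝ) < r := Nat.cast_pos.2 hr
  have hP0 : ∀ k ∈ grid d r, 0 ≤ Pw d r k x := fun k _ => Pw_nonneg hx k
  have hvar : ∑ k ∈ grid d r, ((k i : ℝ) / r - x i) ^ 2 * Pw d r k x ≤ 1 / (4 * r) := by
    rw [sum_sq_mul_Pw hr, div_le_div_iff₀ hr' (by positivity)]
    nlinarith [sq_nonneg (2 * x i - 1)]
  simp only [← min_div_div_right hr'.le]
  calc |√r * ∑ k ∈ grid d r, ∑ l ∈ grid d r,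
          (min ((k i : ℝ) / r) ((l i : ℝ) / r) - x i) * Pw d r k x * Pw d r l x|
      ≤ √r * (2 * ∑ k ∈ grid d r, |(k i : ℝ) / r - x i| * Pw d r k x) := by
        rw [abs_mul, abs_of_nonneg (Real.sqrt_nonneg _)]
        gcongr
        exact abs_sum_sum_min_sub_mul_le hP0 (sum_Pw d r x) (fun k => (k i : ℝ) / r) (x i)
    _ ≤ √r * (2 * √(1 / (4 * r))) := by
        gcongr
        exact (sum_abs_mul_le_sqrt_sum_sq_mul hP0 (sum_Pw d r x) _).trans (Real.sqrt_le_sqrt hvar)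
    _ = 1 := by
        have h4r : 4 * (r : ℝ) = (2 * √r) ^ 2 := by rw [mul_pow, Real.sq_sqrt hr'.le]; norm_num
        rw [h4r, one_div, Real.sqrt_inv, Real.sqrt_sq (by positivity)]
        field_simp
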